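/- Let λ^u : [0,1] → ℝ be continuous with λ^u(x) ≥ 1/l > 0, let f^u, f^v : [0,1] × ℝ² → ℝ be continuous and globally Lipschitz in the state arguments uniformly in x, and let μ̂, ν̂ be as defined from λ^u, λ^v (so μ̂ is continuous with μ̂(x) > 0 on [0,1]). Suppose (û₁, v̂₁) and (û₂, v̂₂) are two C¹ solutions on [0,1] × [0,∞) of the observer dynamics ∂_x û(x,t) = f^u(x, û(x,t), v̂(x,t)) / λ^u(x), ∂_t v̂(x,t) = μ̂(x) ∂_x v̂(x,t) + ν̂(x) f^v(x, û(x,t), v̂(x,t)), with identical boundary data û₁(1,t) = û₂(1,t) and v̂₁(1,t) = v̂₂(1,t) for all t ≥ 0 (but possibly different initial data at t = 0). Then for all t ≥ ∫_0^1 dξ/μ̂(ξ) and all x ∈ [0,1], û₁(x,t) = û₂(x,t) and v̂₁(x,t) = v̂₂(x,t). -/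

import Mathlib

open Set MeasureTheory intervalIntegral Filter

noncomputable section

/-- C¹ solution on `[0,1] × [0,∞)` of the observer PDE
`∂ₓ û = f^u(x,û,v̂)/λ^u(x)`, `∂ₜ v̂ = μ̂(x) ∂ₓ v̂ + ν̂(x) f^v(x,û,v̂)`,
with explicit (continuous) `x`-derivative function `vhx` for `v̂`. -/
def IsObserverSolution (lu mu nu : ℝ → ℝ) (fu fv : ℝ → ℝ → ℝ → ℝ)
    (uh vh vhx : ℝ → ℝ → ℝ) : Prop :=
  (∀ x ∈ Icc (0:ℝ) 1, ∀ t ∈ Ici (0:ℝ),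
    HasDerivAt (fun y => uh y t) (fu x (uh x t) (vh x t) / lu x) x ∧
    HasDerivAt (fun y => vh y t) (vhx x t) x ∧
    HasDerivAt (fun s => vh x s)
      (mu x * vhx x t + nu x * fv x (uh x t) (vh x t)) t) ∧
  ContinuousOn (fun p : ℝ × ℝ => vhx p.1 p.2) (Icc (0:ℝ) 1 ×ˢ Ici (0:ℝ))


open Asymptotics in
lemma hasFDerivAt_of_partials (f fx ft : ℝ → ℝ → ℝ) (p : ℝ × ℝ)
    (hx : ∀ᶠ q : ℝ × ℝ in nhds p, HasDerivAt (fun y => f y q.2) (fx q.1 q.2) q.1)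
    (hxc : ContinuousAt (fun q : ℝ × ℝ => fx q.1 q.2) p)
    (ht : HasDerivAt (fun s => f p.1 s) (ft p.1 p.2) p.2) :
    HasFDerivAt (fun q : ℝ × ℝ => f q.1 q.2)
      ((fx p.1 p.2) • (ContinuousLinearMap.fst ℝ ℝ ℝ) +
       (ft p.1 p.2) • (ContinuousLinearMap.snd ℝ ℝ ℝ)) p := by
  rw [hasFDerivAt_iff_isLittleO_nhds_zero]
  have key : (fun h : ℝ × ℝ => f (p.1 + h.1) (p.2 + h.2) - f p.1 (p.2 + h.2)
      - h.1 * fx p.1 p.2) =o[nhds (0 : ℝ × ℝ)] (fun h : ℝ × ℝ => h) := by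
    rw [isLittleO_iff]
    intro ε hε
    have hev : ∀ᶠ q : ℝ × ℝ in nhds p,
        HasDerivAt (fun y => f y q.2) (fx q.1 q.2) q.1 ∧
          dist (fx q.1 q.2) (fx p.1 p.2) < ε :=
      hx.and (Metric.tendsto_nhds.1 hxc ε hε)
    obtain ⟨δ, hδ, hδp⟩ := Metric.eventually_nhds_iff.1 hev
    rw [Metric.eventually_nhds_iff]
    refine ⟨δ, hδ, fun h hh => ?_⟩
    rw [dist_zero_right] at hh
    set g : ℝ → ℝ := fun y => f y (p.2 + h.2) - y * fx p.1 p.2 with hg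
    have hmem : ∀ y ∈ uIcc p.1 (p.1 + h.1), dist (y, p.2 + h.2) p < δ := by
      intro y hy
      have h1 : dist y p.1 ≤ |h.1| := by
        have := Real.dist_le_of_mem_uIcc hy (left_mem_uIcc (a := p.1) (b := p.1 + h.1))
        simpa [Real.dist_eq, abs_sub_comm] using this
      have h2 : dist (p.2 + h.2) p.2 = |h.2| := by simp [Real.dist_eq]
      have hle1 : |h.1| ≤ ‖h‖ := norm_fst_le h
      have hle2 : |h.2| ≤ ‖h‖ := norm_snd_le h
      have : dist (y, p.2 + h.2) p = max (dist y p.1) (dist (p.2 + h.2) p.2) := rfl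
      rw [this, h2]
      exact lt_of_le_of_lt (max_le (h1.trans hle1) hle2) hh
    have hgd : ∀ y ∈ uIcc p.1 (p.1 + h.1),
        HasDerivWithinAt g (fx y (p.2 + h.2) - fx p.1 p.2) (uIcc p.1 (p.1 + h.1)) y := by
      intro y hy
      exact (((hδp (hmem y hy)).1).sub (hasDerivAt_mul_const (fx p.1 p.2))).hasDerivWithinAt
    have hbd : ∀ y ∈ uIcc p.1 (p.1 + h.1), ‖fx y (p.2 + h.2) - fx p.1 p.2‖ ≤ ε := by
      intro y hy
      have := (hδp (hmem y hy)).2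
      rw [Real.dist_eq] at this
      exact le_of_lt this
    have := Convex.norm_image_sub_le_of_norm_hasDerivWithin_le hgd hbd (convex_uIcc _ _)
      (left_mem_uIcc) (right_mem_uIcc)
    have heq : g (p.1 + h.1) - g p.1
        = f (p.1 + h.1) (p.2 + h.2) - f p.1 (p.2 + h.2) - h.1 * fx p.1 p.2 := by
      simp only [hg]; ring
    rw [heq] at this
    refine this.trans ?_
    have : ‖p.1 + h.1 - p.1‖ ≤ ‖h‖ := by
      simpa using (norm_fst_le h)
    nlinarith [norm_nonneg h, le_of_lt hε]
  have t2 : (fun h : ℝ × ℝ => f p.1 (p.2 + h.2) - f p.1 p.2 - h.2 * ft p.1 p.2)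
      =o[nhds (0 : ℝ × ℝ)] (fun h : ℝ × ℝ => h) := by
    have hcomp : Tendsto (fun h : ℝ × ℝ => p.2 + h.2) (nhds 0) (nhds p.2) := by
      have : Continuous (fun h : ℝ × ℝ => p.2 + h.2) := by continuity
      simpa using this.tendsto (0 : ℝ × ℝ)
    have := (hasDerivAt_iff_isLittleO.1 ht).comp_tendsto hcomp
    simp only [Function.comp_def, add_sub_cancel_left] at this
    have hO : (fun h : ℝ × ℝ => h.2) =O[nhds (0 : ℝ × ℝ)] (fun h : ℝ × ℝ => h) :=
      isBigO_of_le _ (fun h => norm_snd_le h)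
    refine (this.congr' ?_ EventuallyEq.rfl).trans_isBigO hO
    filter_upwards with h
    simp only [smul_eq_mul]
  have main := key.add t2
  refine main.congr' ?_ EventuallyEq.rfl
  filter_upwards with h
  simp only [ContinuousLinearMap.add_apply, ContinuousLinearMap.coe_smul',
    Pi.smul_apply, ContinuousLinearMap.coe_fst', ContinuousLinearMap.coe_snd',
    smul_eq_mul, Prod.fst_add, Prod.snd_add]
  ring

open Asymptotics in
lemma hasDerivAt_comp_curve (f fx ft : ℝ → ℝ → ℝ) (γ : ℝ → ℝ) (γ' x₀ : ℝ)
    (hγ : HasDerivAt γ γ' x₀)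
    (hx : ∀ᶠ q : ℝ × ℝ in nhds (x₀, γ x₀), HasDerivAt (fun y => f y q.2) (fx q.1 q.2) q.1)
    (hxc : ContinuousAt (fun q : ℝ × ℝ => fx q.1 q.2) (x₀, γ x₀))
    (ht : HasDerivAt (fun s => f x₀ s) (ft x₀ (γ x₀)) (γ x₀)) :
    HasDerivAt (fun y => f y (γ y)) (fx x₀ (γ x₀) + ft x₀ (γ x₀) * γ') x₀ := by
  have hF := hasFDerivAt_of_partials f fx ft (x₀, γ x₀) hx hxc ht
  have hc : HasDerivAt (fun y => ((y, γ y) : ℝ × ℝ)) ((1 : ℝ), γ') x₀ :=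
    (hasDerivAt_id x₀).prodMk hγ
  have := hF.comp_hasDerivAt x₀ hc
  refine this.congr_deriv (Eq.symm ?_)
  simp [ContinuousLinearMap.add_apply, smul_eq_mul]

lemma gronwall_aux (u : ℝ → ℝ) (a b : ℝ) (ha : 0 ≤ a) (hb : 0 ≤ b)
    (hu : ContinuousOn u (Icc 0 1)) (hnn : ∀ y ∈ Icc (0:ℝ) 1, 0 ≤ u y)
    (hle : ∀ y ∈ Icc (0:ℝ) 1, u y ≤ a + b * ∫ s in y..1, u s) :
    ∀ y ∈ Icc (0:ℝ) 1, u y ≤ a * Real.exp b := by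
  have hsub : ∀ x y : ℝ, x ∈ Icc (0:ℝ) 1 → y ∈ Icc (0:ℝ) 1 → uIcc x y ⊆ Icc (0:ℝ) 1 := by
    intro x y hx hy
    have hx' : x ∈ uIcc (0:ℝ) 1 := by rw [uIcc_of_le zero_le_one]; exact hx
    have hy' : y ∈ uIcc (0:ℝ) 1 := by rw [uIcc_of_le zero_le_one]; exact hy
    rw [← uIcc_of_le (zero_le_one (α := ℝ))]
    exact uIcc_subset_uIcc hx' hy'
  have hint : ∀ x y : ℝ, x ∈ Icc (0:ℝ) 1 → y ∈ Icc (0:ℝ) 1 →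
      IntervalIntegrable u volume x y := by
    intro x y hx hy
    exact (hu.mono (hsub x y hx hy)).intervalIntegrable
  set R : ℝ → ℝ := fun y => ∫ s in y..1, u s with hR
  -- continuity of R
  obtain ⟨Mu, hMu⟩ := isCompact_Icc.exists_bound_of_continuousOn hu
  have hMu0 : (0:ℝ) ≤ max Mu 0 := le_max_right _ _
  have hRlip : ∀ x ∈ Icc (0:ℝ) 1, ∀ y ∈ Icc (0:ℝ) 1,
      dist (R x) (R y) ≤ max Mu 0 * dist x y := by
    intro x hx y hy
    have hsplit : (∫ s in x..y, u s) + (∫ s in y..1, u s) = ∫ s in x..1, u s :=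
      integral_add_adjacent_intervals (hint x y hx hy)
        (hint y 1 hy (right_mem_Icc.2 zero_le_one))
    have : R x - R y = ∫ s in x..y, u s := by
      rw [hR]; simp only; linarith [hsplit]
    rw [Real.dist_eq, this, Real.dist_eq, abs_sub_comm, ← Real.norm_eq_abs]
    apply intervalIntegral.norm_integral_le_of_norm_le_const
    intro s hs
    have hs' : s ∈ Icc (0:ℝ) 1 := hsub x y hx hy (uIoc_subset_uIcc hs)
    exact le_trans (hMu s hs') (le_max_left _ _)
  have hRcont : ContinuousOn R (Icc 0 1) := by
    intro x hx
    rw [Metric.continuousWithinAt_iff]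
    intro ε hε
    refine ⟨ε / (max Mu 0 + 1), by positivity, fun y hy hdy => ?_⟩
    calc dist (R y) (R x) ≤ max Mu 0 * dist y x := hRlip y hy x hx
    _ ≤ max Mu 0 * (ε / (max Mu 0 + 1)) := by
        apply mul_le_mul_of_nonneg_left (le_of_lt hdy) hMu0
    _ < ε := by
        have hlt : (max Mu 0) / (max Mu 0 + 1) < 1 := by
          rw [div_lt_one (by positivity)]; linarith
        calc max Mu 0 * (ε / (max Mu 0 + 1)) = ε * (max Mu 0 / (max Mu 0 + 1)) := by ring
        _ < ε * 1 := by exact mul_lt_mul_of_pos_left hlt hε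
        _ = ε := mul_one ε
  have hRd : ∀ y ∈ Ioo (0:ℝ) 1, HasDerivAt R (-(u y)) y := by
    intro y hy
    have hyI : y ∈ Icc (0:ℝ) 1 := Ioo_subset_Icc_self hy
    have hca : ContinuousAt u y := hu.continuousAt (Icc_mem_nhds hy.1 hy.2)
    have hmeas : StronglyMeasurableAtFilter u (nhds y) volume := by
      refine ContinuousOn.stronglyMeasurableAtFilter isOpen_Ioo (hu.mono Ioo_subset_Icc_self) y hy
    exact integral_hasDerivAt_left (hint y 1 hyI (right_mem_Icc.2 zero_le_one)) hmeas hca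
  have hRnn : ∀ y ∈ Icc (0:ℝ) 1, 0 ≤ R y := by
    intro y hy
    apply intervalIntegral.integral_nonneg hy.2
    intro s hs
    exact hnn s ⟨le_trans hy.1 hs.1, hs.2⟩
  set G : ℝ → ℝ := fun y => (b * R y + a) * Real.exp (b * y) with hG
  have hGd : ∀ y ∈ Ioo (0:ℝ) 1, HasDerivAt G
      ((b * (-(u y))) * Real.exp (b * y) + (b * R y + a) * (Real.exp (b * y) * (b * 1))) y := by
    intro y hy
    exact (((hRd y hy).const_mul b).add_const a).mul
      (((hasDerivAt_id y).const_mul b).exp)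
  have hGc : ContinuousOn G (Icc 0 1) :=
    (((hRcont.const_smul b).add continuousOn_const).mul
      (Real.continuous_exp.comp (continuous_const.mul continuous_id)).continuousOn)
  have hGmono : MonotoneOn G (Icc 0 1) := by
    apply monotoneOn_of_deriv_nonneg (convex_Icc 0 1) hGc
    · intro y hy
      rw [interior_Icc] at hy
      exact (hGd y hy).differentiableAt.differentiableWithinAt
    · intro y hy
      rw [interior_Icc] at hy
      rw [(hGd y hy).deriv]
      have hyI : y ∈ Icc (0:ℝ) 1 := Ioo_subset_Icc_self hy
      have h1 : 0 ≤ a + b * R y - u y := by linarith [hle y hyI]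
      have h2 : (0:ℝ) < Real.exp (b * y) := Real.exp_pos _
      nlinarith [mul_nonneg (mul_nonneg hb (le_of_lt h2)) h1]
  intro y hy
  have hle2 : G y ≤ G 1 := hGmono hy (right_mem_Icc.2 zero_le_one) hy.2
  have hR1 : R 1 = 0 := by rw [hR]; simp
  have hG1 : G 1 = a * Real.exp b := by rw [hG]; simp [hR1]
  have hexp1 : (1:ℝ) ≤ Real.exp (b * y) := by
    apply Real.one_le_exp
    exact mul_nonneg hb hy.1
  have : u y ≤ (b * R y + a) := by linarith [hle y hy]
  calc u y ≤ (b * R y + a) := this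
  _ ≤ (b * R y + a) * Real.exp (b * y) := by
      have h3 : 0 ≤ b * R y + a := by nlinarith [hRnn y hy]
      nlinarith [mul_nonneg h3 (sub_nonneg.2 hexp1)]
  _ = G y := rfl
  _ ≤ a * Real.exp b := by rw [← hG1]; exact hle2

lemma contOn_param_integral (g : ℝ → ℝ → ℝ)
    (hg : ContinuousOn (fun p : ℝ × ℝ => g p.1 p.2) (Icc 0 1 ×ˢ Ici 0)) :
    ContinuousOn (fun p : ℝ × ℝ => ∫ ξ in p.1..1, g ξ p.2) (Icc 0 1 ×ˢ Ici 0) := by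
  intro p hp
  rw [mem_prod] at hp
  obtain ⟨hp1, hp2⟩ := hp
  set T : ℝ := p.2 + 1 with hT
  set K : Set (ℝ × ℝ) := Icc 0 1 ×ˢ Icc 0 T with hK
  have hKc : IsCompact K := isCompact_Icc.prod isCompact_Icc
  have hKsub : K ⊆ Icc 0 1 ×ˢ Ici 0 := prod_mono subset_rfl Icc_subset_Ici_self
  have hgK : ContinuousOn (fun p : ℝ × ℝ => g p.1 p.2) K := hg.mono hKsub
  obtain ⟨B, hB⟩ := hKc.exists_bound_of_continuousOn hgK
  set B' : ℝ := max B 0 with hB'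
  have hB'0 : 0 ≤ B' := le_max_right _ _
  have hB'b : ∀ q ∈ K, |g q.1 q.2| ≤ B' := fun q hq =>
    le_trans (hB q hq) (le_max_left _ _)
  have huc := hKc.uniformContinuousOn_of_continuous hgK
  rw [Metric.uniformContinuousOn_iff] at huc
  -- continuity of slices
  have hslice : ∀ t ∈ Icc (0:ℝ) T, ContinuousOn (fun ξ => g ξ t) (Icc 0 1) := by
    intro t ht
    have : ContinuousOn (fun ξ : ℝ => ((ξ, t) : ℝ × ℝ)) (Icc 0 1) :=
      (continuous_id.prodMk continuous_const).continuousOn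
    exact hgK.comp this (fun ξ hξ => by exact mk_mem_prod hξ ht)
  have hintg : ∀ t ∈ Icc (0:ℝ) T, ∀ x ∈ Icc (0:ℝ) 1, ∀ y ∈ Icc (0:ℝ) 1,
      IntervalIntegrable (fun ξ => g ξ t) volume x y := by
    intro t ht x hx y hy
    apply ContinuousOn.intervalIntegrable
    apply (hslice t ht).mono
    have hx' : x ∈ uIcc (0:ℝ) 1 := by rw [uIcc_of_le zero_le_one]; exact hx
    have hy' : y ∈ uIcc (0:ℝ) 1 := by rw [uIcc_of_le zero_le_one]; exact hy
    rw [← uIcc_of_le (zero_le_one (α := ℝ))]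
    exact uIcc_subset_uIcc hx' hy'
  rw [Metric.continuousWithinAt_iff]
  intro ε hε
  obtain ⟨δ₁, hδ₁, hδ₁p⟩ := huc (ε / 4) (by positivity)
  set δ₂ : ℝ := ε / (4 * (B' + 1)) with hδ₂
  refine ⟨min (min δ₁ δ₂) 1, by positivity, fun q hq hdq => ?_⟩
  rw [mem_prod] at hq
  obtain ⟨hq1, hq2⟩ := hq
  have hd1 : dist q p < δ₁ := lt_of_lt_of_le hdq (le_trans (min_le_left _ _) (min_le_left _ _))
  have hd2 : dist q p < δ₂ := lt_of_lt_of_le hdq (le_trans (min_le_left _ _) (min_le_right _ _))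
  have hd3 : dist q p < 1 := lt_of_lt_of_le hdq (min_le_right _ _)
  have hdfst : dist q.1 p.1 ≤ dist q p := by rw [Prod.dist_eq]; exact le_max_left _ _
  have hdsnd : dist q.2 p.2 ≤ dist q p := by rw [Prod.dist_eq]; exact le_max_right _ _
  have hq2T : q.2 ∈ Icc (0:ℝ) T := by
    constructor
    · exact hq2
    · have : |q.2 - p.2| < 1 := lt_of_le_of_lt (by rw [← Real.dist_eq]; exact hdsnd) hd3
      have := abs_lt.1 this
      rw [hT]; linarith
  have hp2T : p.2 ∈ Icc (0:ℝ) T := ⟨hp2, by rw [hT]; linarith⟩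
  -- decompose
  have hsplit : (∫ ξ in q.1..1, g ξ p.2) = (∫ ξ in q.1..p.1, g ξ p.2) + ∫ ξ in p.1..1, g ξ p.2 :=
    (integral_add_adjacent_intervals (hintg p.2 hp2T q.1 hq1 p.1 hp1)
      (hintg p.2 hp2T p.1 hp1 1 (right_mem_Icc.2 zero_le_one))).symm
  have key : (∫ ξ in q.1..1, g ξ q.2) - (∫ ξ in p.1..1, g ξ p.2)
      = (∫ ξ in q.1..1, (g ξ q.2 - g ξ p.2)) + ∫ ξ in q.1..p.1, g ξ p.2 := by
    rw [intervalIntegral.integral_sub (hintg q.2 hq2T q.1 hq1 1 (right_mem_Icc.2 zero_le_one))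
      (hintg p.2 hp2T q.1 hq1 1 (right_mem_Icc.2 zero_le_one))]
    rw [hsplit]; ring
  have huIcc : ∀ ξ, ξ ∈ uIcc q.1 (1:ℝ) → ξ ∈ Icc (0:ℝ) 1 := by
    intro ξ hξ
    have h1 : q.1 ∈ uIcc (0:ℝ) 1 := by rw [uIcc_of_le zero_le_one]; exact hq1
    have h2 : (1:ℝ) ∈ uIcc (0:ℝ) 1 := by rw [uIcc_of_le zero_le_one]; exact right_mem_Icc.2 zero_le_one
    have := uIcc_subset_uIcc h1 h2 hξ
    rwa [uIcc_of_le (zero_le_one (α := ℝ))] at this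
  have hbound1 : |∫ ξ in q.1..1, (g ξ q.2 - g ξ p.2)| ≤ (ε / 4) * |1 - q.1| := by
    rw [← Real.norm_eq_abs, ← Real.norm_eq_abs]
    apply intervalIntegral.norm_integral_le_of_norm_le_const
    intro ξ hξ
    have hξm : ξ ∈ Icc (0:ℝ) 1 := huIcc ξ (uIoc_subset_uIcc hξ)
    have hm1 : ((ξ, q.2) : ℝ × ℝ) ∈ K := mk_mem_prod hξm hq2T
    have hm2 : ((ξ, p.2) : ℝ × ℝ) ∈ K := mk_mem_prod hξm hp2T
    have hdd : dist ((ξ, q.2) : ℝ × ℝ) ((ξ, p.2) : ℝ × ℝ) < δ₁ := by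
      rw [Prod.dist_eq]
      simp only [dist_self]
      rw [max_eq_right dist_nonneg]
      exact lt_of_le_of_lt hdsnd hd1
    have := hδ₁p _ hm1 _ hm2 hdd
    rw [Real.dist_eq] at this
    rw [Real.norm_eq_abs]
    exact le_of_lt this
  have hbound2 : |∫ ξ in q.1..p.1, g ξ p.2| ≤ B' * |p.1 - q.1| := by
    rw [← Real.norm_eq_abs, ← Real.norm_eq_abs]
    apply intervalIntegral.norm_integral_le_of_norm_le_const
    intro ξ hξ
    have hξm : ξ ∈ Icc (0:ℝ) 1 := by
      have h1 : q.1 ∈ uIcc (0:ℝ) 1 := by rw [uIcc_of_le zero_le_one]; exact hq1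
      have h2 : p.1 ∈ uIcc (0:ℝ) 1 := by rw [uIcc_of_le zero_le_one]; exact hp1
      have := uIcc_subset_uIcc h1 h2 (uIoc_subset_uIcc hξ)
      rwa [uIcc_of_le (zero_le_one (α := ℝ))] at this
    rw [Real.norm_eq_abs]
    exact hB'b (ξ, p.2) (mk_mem_prod hξm hp2T)
  have habs1 : |1 - q.1| ≤ 1 := by
    rw [abs_le]; constructor <;> [linarith [hq1.2]; linarith [hq1.1]]
  have habs2 : |p.1 - q.1| < δ₂ := by
    rw [abs_sub_comm, ← Real.dist_eq]
    exact lt_of_le_of_lt hdfst hd2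
  rw [Real.dist_eq, key]
  calc |(∫ ξ in q.1..1, (g ξ q.2 - g ξ p.2)) + ∫ ξ in q.1..p.1, g ξ p.2|
      ≤ |∫ ξ in q.1..1, (g ξ q.2 - g ξ p.2)| + |∫ ξ in q.1..p.1, g ξ p.2| := abs_add_le _ _
    _ ≤ (ε / 4) * 1 + B' * δ₂ := by
        apply add_le_add
        · exact hbound1.trans (by nlinarith)
        · exact hbound2.trans (by nlinarith)
    _ < ε := by
        have hlt : B' * δ₂ < ε / 4 := by
          rw [hδ₂]
          have h1 : B' / (B' + 1) < 1 := by rw [div_lt_one (by positivity)]; linarith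
          have hne : B' + 1 ≠ 0 := by positivity
          have heq : B' * (ε / (4 * (B' + 1))) = (ε/4) * (B'/(B'+1)) := by
            field_simp
          rw [heq]
          calc (ε/4) * (B'/(B'+1)) < (ε/4) * 1 := mul_lt_mul_of_pos_left h1 (by positivity)
          _ = ε/4 := mul_one _
        linarith

lemma vh_jointCont (vh vhx : ℝ → ℝ → ℝ) (D : ℝ → ℝ → ℝ)
    (hdx : ∀ x ∈ Icc (0:ℝ) 1, ∀ t ∈ Ici (0:ℝ), HasDerivAt (fun y => vh y t) (vhx x t) x)
    (hdt : ∀ t ∈ Ici (0:ℝ), HasDerivAt (fun s => vh 1 s) (D 1 t) t)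
    (hvc : ContinuousOn (fun p : ℝ × ℝ => vhx p.1 p.2) (Icc 0 1 ×ˢ Ici 0)) :
    ContinuousOn (fun p : ℝ × ℝ => vh p.1 p.2) (Icc 0 1 ×ˢ Ici 0) := by
  have hid : ∀ p : ℝ × ℝ, p ∈ Icc (0:ℝ) 1 ×ˢ Ici (0:ℝ) →
      vh p.1 p.2 = vh 1 p.2 - ∫ ξ in p.1..1, vhx ξ p.2 := by
    intro p hp
    rw [mem_prod] at hp
    obtain ⟨hp1, hp2⟩ := hp
    have hu : uIcc p.1 (1:ℝ) ⊆ Icc (0:ℝ) 1 := by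
      rw [uIcc_of_le hp1.2]
      exact Icc_subset_Icc hp1.1 le_rfl
    have hftc : ∫ ξ in p.1..1, vhx ξ p.2 = vh 1 p.2 - vh p.1 p.2 := by
      refine intervalIntegral.integral_eq_sub_of_hasDerivAt (f := fun y => vh y p.2)
        (fun ξ hξ => hdx ξ (hu hξ) p.2 hp2) ?_
      apply ContinuousOn.intervalIntegrable
      have hcurve : ContinuousOn (fun ξ : ℝ => ((ξ, p.2) : ℝ × ℝ)) (uIcc p.1 1) :=
        (continuous_id.prodMk continuous_const).continuousOn
      exact hvc.comp hcurve (fun ξ hξ => mk_mem_prod (hu hξ) hp2)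
    rw [hftc]; ring
  have hc1 : ContinuousOn (fun p : ℝ × ℝ => vh 1 p.2) (Icc 0 1 ×ˢ Ici 0) := by
    have hbase : ContinuousOn (fun t => vh 1 t) (Ici (0:ℝ)) := by
      intro t ht
      exact ((hdt t ht).continuousAt).continuousWithinAt
    exact hbase.comp continuous_snd.continuousOn (fun p hp => (mem_prod.1 hp).2)
  have := hc1.sub (contOn_param_integral vhx hvc)
  exact ContinuousOn.congr this hid

/-- finite-time determination of the observer PDE state by its
boundary data at `x = 1`.  With `ν̂ = λ^u/(λ^u+λ^v)` and `μ̂ = λ^v ν̂`, any two C¹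
solutions of the observer dynamics on `[0,1] × [0,∞)` with identical boundary data
at `x = 1` (but possibly different initial data) coincide for all
`t ≥ ∫_0^1 dξ/μ̂(ξ)`. -/
theorem statement8
    (lu lv mu nu : ℝ → ℝ) (fu fv : ℝ → ℝ → ℝ → ℝ) (l lF : ℝ)
    (hl : 0 < l)
    (hlu_cont : ContinuousOn lu (Icc (0:ℝ) 1))
    (hlv_cont : ContinuousOn lv (Icc (0:ℝ) 1))
    (hlu_low : ∀ x ∈ Icc (0:ℝ) 1, 1 / l ≤ lu x)
    (hlv_low : ∀ x ∈ Icc (0:ℝ) 1, 1 / l ≤ lv x)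
    (hnu : ∀ x ∈ Icc (0:ℝ) 1, nu x = lu x / (lu x + lv x))
    (hmu : ∀ x ∈ Icc (0:ℝ) 1, mu x = lv x * nu x)
    (hfu_cont : ContinuousOn (fun p : ℝ × ℝ × ℝ => fu p.1 p.2.1 p.2.2)
      (Icc (0:ℝ) 1 ×ˢ (univ : Set (ℝ × ℝ))))
    (hfv_cont : ContinuousOn (fun p : ℝ × ℝ × ℝ => fv p.1 p.2.1 p.2.2)
      (Icc (0:ℝ) 1 ×ˢ (univ : Set (ℝ × ℝ))))
    (hfu_lip : ∀ x ∈ Icc (0:ℝ) 1, ∀ a b a' b' : ℝ,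
      |fu x a b - fu x a' b'| ≤ lF * max |a - a'| |b - b'|)
    (hfv_lip : ∀ x ∈ Icc (0:ℝ) 1, ∀ a b a' b' : ℝ,
      |fv x a b - fv x a' b'| ≤ lF * max |a - a'| |b - b'|)
    (uh1 vh1 vhx1 uh2 vh2 vhx2 : ℝ → ℝ → ℝ)
    (hsol1 : IsObserverSolution lu mu nu fu fv uh1 vh1 vhx1)
    (hsol2 : IsObserverSolution lu mu nu fu fv uh2 vh2 vhx2)
    (hbc_u : ∀ t ∈ Ici (0:ℝ), uh1 1 t = uh2 1 t)
    (hbc_v : ∀ t ∈ Ici (0:ℝ), vh1 1 t = vh2 1 t) :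
    ∀ t : ℝ, (∫ ξ in (0:ℝ)..1, (mu ξ)⁻¹) ≤ t →
      ∀ x ∈ Icc (0:ℝ) 1, uh1 x t = uh2 x t ∧ vh1 x t = vh2 x t := by
  obtain ⟨hsol1d, hvx1c⟩ := hsol1
  obtain ⟨hsol2d, hvx2c⟩ := hsol2
  have h0mem : (0:ℝ) ∈ Icc (0:ℝ) 1 := left_mem_Icc.2 zero_le_one
  have h1mem : (1:ℝ) ∈ Icc (0:ℝ) 1 := right_mem_Icc.2 zero_le_one
  have hl' : (0:ℝ) < 1 / l := by positivity
  have hlu_pos : ∀ x ∈ Icc (0:ℝ) 1, 0 < lu x := fun x hx => lt_of_lt_of_le hl' (hlu_low x hx)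
  have hlv_pos : ∀ x ∈ Icc (0:ℝ) 1, 0 < lv x := fun x hx => lt_of_lt_of_le hl' (hlv_low x hx)
  have hsum_pos : ∀ x ∈ Icc (0:ℝ) 1, 0 < lu x + lv x :=
    fun x hx => add_pos (hlu_pos x hx) (hlv_pos x hx)
  have hlF : 0 ≤ lF := by
    have h := hfu_lip 0 h0mem 1 0 0 0
    norm_num at h
    linarith [abs_nonneg (fu 0 1 0 - fu 0 0 0)]
  have hmu_eq : ∀ x ∈ Icc (0:ℝ) 1, mu x = lu x * lv x / (lu x + lv x) := by
    intro x hx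
    rw [hmu x hx, hnu x hx]
    ring
  have hmu_pos : ∀ x ∈ Icc (0:ℝ) 1, 0 < mu x := by
    intro x hx
    rw [hmu_eq x hx]
    exact div_pos (mul_pos (hlu_pos x hx) (hlv_pos x hx)) (hsum_pos x hx)
  have hnu_nonneg : ∀ x ∈ Icc (0:ℝ) 1, 0 ≤ nu x := by
    intro x hx
    rw [hnu x hx]
    exact le_of_lt (div_pos (hlu_pos x hx) (hsum_pos x hx))
  have hnu_le1 : ∀ x ∈ Icc (0:ℝ) 1, nu x ≤ 1 := by
    intro x hx
    rw [hnu x hx, div_le_one (hsum_pos x hx)]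
    linarith [hlv_pos x hx]
  have hmu_le_lu : ∀ x ∈ Icc (0:ℝ) 1, mu x ≤ lu x := by
    intro x hx
    rw [hmu_eq x hx, div_le_iff₀ (hsum_pos x hx)]
    nlinarith [hlu_pos x hx, hlv_pos x hx]
  have hmu_low : ∀ x ∈ Icc (0:ℝ) 1, (2*l)⁻¹ ≤ mu x := by
    intro x hx
    rw [hmu_eq x hx, inv_eq_one_div, div_le_div_iff₀ (by positivity) (hsum_pos x hx)]
    have h1 : 1 ≤ l * lu x := by
      have := hlu_low x hx
      rw [div_le_iff₀ hl] at this
      linarith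
    have h2 : 1 ≤ l * lv x := by
      have := hlv_low x hx
      rw [div_le_iff₀ hl] at this
      linarith
    nlinarith [hlu_pos x hx, hlv_pos x hx]
  have hmuinv_le : ∀ x ∈ Icc (0:ℝ) 1, (mu x)⁻¹ ≤ 2*l := by
    intro x hx
    have := inv_anti₀ (by positivity : (0:ℝ) < (2*l)⁻¹) (hmu_low x hx)
    rwa [inv_inv] at this
  have hmuinv_nonneg : ∀ x ∈ Icc (0:ℝ) 1, 0 ≤ (mu x)⁻¹ :=
    fun x hx => le_of_lt (inv_pos.2 (hmu_pos x hx))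
  have hluinv_le_muinv : ∀ x ∈ Icc (0:ℝ) 1, (lu x)⁻¹ ≤ (mu x)⁻¹ :=
    fun x hx => inv_anti₀ (hmu_pos x hx) (hmu_le_lu x hx)
  have hluinv_le_l : ∀ x ∈ Icc (0:ℝ) 1, (lu x)⁻¹ ≤ l := by
    intro x hx
    have h := inv_anti₀ hl' (hlu_low x hx)
    rwa [one_div, inv_inv] at h
  have hmu_cont : ContinuousOn mu (Icc (0:ℝ) 1) := by
    apply ContinuousOn.congr ((hlu_cont.mul hlv_cont).div (hlu_cont.add hlv_cont)
      (fun x hx => ne_of_gt (hsum_pos x hx)))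
    exact hmu_eq
  have hmuinv_cont : ContinuousOn (fun ξ => (mu ξ)⁻¹) (Icc (0:ℝ) 1) :=
    hmu_cont.inv₀ (fun x hx => ne_of_gt (hmu_pos x hx))
  have hIccsub : ∀ x ∈ Icc (0:ℝ) 1, ∀ y ∈ Icc (0:ℝ) 1, uIcc x y ⊆ Icc (0:ℝ) 1 := by
    intro x hx y hy
    have hx' : x ∈ uIcc (0:ℝ) 1 := by rw [uIcc_of_le zero_le_one]; exact hx
    have hy' : y ∈ uIcc (0:ℝ) 1 := by rw [uIcc_of_le zero_le_one]; exact hy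
    rw [← uIcc_of_le (zero_le_one (α := ℝ))]
    exact uIcc_subset_uIcc hx' hy'
  have htauint : ∀ x ∈ Icc (0:ℝ) 1, ∀ y ∈ Icc (0:ℝ) 1,
      IntervalIntegrable (fun ξ => (mu ξ)⁻¹) volume x y :=
    fun x hx y hy => (hmuinv_cont.mono (hIccsub x hx y hy)).intervalIntegrable
  set tau : ℝ → ℝ := fun x => ∫ ξ in x..1, (mu ξ)⁻¹ with htau
  have htau_split : ∀ x ∈ Icc (0:ℝ) 1, ∀ y ∈ Icc (0:ℝ) 1,
      tau x = (∫ ξ in x..y, (mu ξ)⁻¹) + tau y := by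
    intro x hx y hy
    rw [htau]
    exact (integral_add_adjacent_intervals (htauint x hx y hy) (htauint y hy 1 h1mem)).symm
  have htau_anti : ∀ x ∈ Icc (0:ℝ) 1, ∀ y ∈ Icc (0:ℝ) 1, x ≤ y → tau y ≤ tau x := by
    intro x hx y hy hxy
    rw [htau_split x hx y hy]
    have : 0 ≤ ∫ ξ in x..y, (mu ξ)⁻¹ := by
      apply intervalIntegral.integral_nonneg hxy
      intro ξ hξ
      exact hmuinv_nonneg ξ ⟨le_trans hx.1 hξ.1, le_trans hξ.2 hy.2⟩
    linarith
  have htau1 : tau 1 = 0 := by rw [htau]; simp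
  have htau_nonneg : ∀ x ∈ Icc (0:ℝ) 1, 0 ≤ tau x := by
    intro x hx
    have := htau_anti x hx 1 h1mem hx.2
    rw [htau1] at this
    linarith
  have htau_pos : ∀ x ∈ Icc (0:ℝ) 1, x < 1 → 0 < tau x := by
    intro x hx hx1
    rw [htau]
    apply intervalIntegral.intervalIntegral_pos_of_pos_on (htauint x hx 1 h1mem)
    · intro ξ hξ
      exact inv_pos.2 (hmu_pos ξ ⟨le_trans hx.1 (le_of_lt hξ.1), le_of_lt hξ.2⟩)
    · exact hx1
  have htau_cont : ContinuousOn tau (Icc (0:ℝ) 1) := by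
    intro x hx
    rw [Metric.continuousWithinAt_iff]
    intro ε hε
    refine ⟨ε / (2*l + 1), by positivity, fun y hy hdy => ?_⟩
    have hlip : dist (tau y) (tau x) ≤ 2*l * dist y x := by
      have hsplit := htau_split y hy x hx
      have : tau y - tau x = ∫ ξ in y..x, (mu ξ)⁻¹ := by linarith
      rw [Real.dist_eq, this, Real.dist_eq, abs_sub_comm, ← Real.norm_eq_abs,
        ← Real.norm_eq_abs]
      apply intervalIntegral.norm_integral_le_of_norm_le_const
      intro ξ hξ
      have hξm : ξ ∈ Icc (0:ℝ) 1 := hIccsub y hy x hx (uIoc_subset_uIcc hξ)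
      rw [Real.norm_eq_abs, abs_of_nonneg (hmuinv_nonneg ξ hξm)]
      exact hmuinv_le ξ hξm
    calc dist (tau y) (tau x) ≤ 2*l * dist y x := hlip
    _ < 2*l * (ε / (2*l + 1)) := by
        apply mul_lt_mul_of_pos_left hdy (by positivity)
    _ ≤ ε := by
        rw [mul_div_assoc']
        rw [div_le_iff₀ (by positivity)]
        nlinarith
  have htau_deriv : ∀ ξ ∈ Ioo (0:ℝ) 1, HasDerivAt tau (-(mu ξ)⁻¹) ξ := by
    intro ξ hξ
    have hξI : ξ ∈ Icc (0:ℝ) 1 := Ioo_subset_Icc_self hξ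
    have hca : ContinuousAt (fun ξ => (mu ξ)⁻¹) ξ :=
      hmuinv_cont.continuousAt (Icc_mem_nhds hξ.1 hξ.2)
    have hmeas : StronglyMeasurableAtFilter (fun ξ => (mu ξ)⁻¹) (nhds ξ) volume :=
      ContinuousOn.stronglyMeasurableAtFilter isOpen_Ioo
        (hmuinv_cont.mono Ioo_subset_Icc_self) ξ hξ
    exact integral_hasDerivAt_left (htauint ξ hξI 1 h1mem) hmeas hca
  -- joint continuity of the difference z
  have hvh1_cont : ContinuousOn (fun p : ℝ × ℝ => vh1 p.1 p.2) (Icc 0 1 ×ˢ Ici 0) :=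
    vh_jointCont vh1 vhx1
      (fun x t => mu x * vhx1 x t + nu x * fv x (uh1 x t) (vh1 x t))
      (fun x hx t ht => (hsol1d x hx t ht).2.1)
      (fun t ht => (hsol1d 1 h1mem t ht).2.2) hvx1c
  have hvh2_cont : ContinuousOn (fun p : ℝ × ℝ => vh2 p.1 p.2) (Icc 0 1 ×ˢ Ici 0) :=
    vh_jointCont vh2 vhx2
      (fun x t => mu x * vhx2 x t + nu x * fv x (uh2 x t) (vh2 x t))
      (fun x hx t ht => (hsol2d x hx t ht).2.1)
      (fun t ht => (hsol2d 1 h1mem t ht).2.2) hvx2c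
  have hz_cont : ContinuousOn (fun p : ℝ × ℝ => vh1 p.1 p.2 - vh2 p.1 p.2)
      (Icc 0 1 ×ˢ Ici 0) := hvh1_cont.sub hvh2_cont
  -- slice continuity of solutions
  have hcu1 : ∀ t, 0 ≤ t → ContinuousOn (fun ξ => uh1 ξ t) (Icc (0:ℝ) 1) :=
    fun t ht ξ hξ => ((hsol1d ξ hξ t ht).1).continuousAt.continuousWithinAt
  have hcu2 : ∀ t, 0 ≤ t → ContinuousOn (fun ξ => uh2 ξ t) (Icc (0:ℝ) 1) :=
    fun t ht ξ hξ => ((hsol2d ξ hξ t ht).1).continuousAt.continuousWithinAt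
  have hcv1 : ∀ t, 0 ≤ t → ContinuousOn (fun ξ => vh1 ξ t) (Icc (0:ℝ) 1) :=
    fun t ht ξ hξ => ((hsol1d ξ hξ t ht).2.1).continuousAt.continuousWithinAt
  have hcv2 : ∀ t, 0 ≤ t → ContinuousOn (fun ξ => vh2 ξ t) (Icc (0:ℝ) 1) :=
    fun t ht ξ hξ => ((hsol2d ξ hξ t ht).2.1).continuousAt.continuousWithinAt
  -- continuity of the fu-difference slices
  have hfu_slice : ∀ t, 0 ≤ t → ContinuousOn
      (fun ξ => (fu ξ (uh1 ξ t) (vh1 ξ t) - fu ξ (uh2 ξ t) (vh2 ξ t)) / lu ξ)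
      (Icc (0:ℝ) 1) := by
    intro t ht
    have hf1 : ContinuousOn (fun ξ => fu ξ (uh1 ξ t) (vh1 ξ t)) (Icc (0:ℝ) 1) := by
      apply hfu_cont.comp (continuousOn_id.prodMk ((hcu1 t ht).prodMk (hcv1 t ht)))
      intro ξ hξ
      exact mk_mem_prod hξ (mem_univ _)
    have hf2 : ContinuousOn (fun ξ => fu ξ (uh2 ξ t) (vh2 ξ t)) (Icc (0:ℝ) 1) := by
      apply hfu_cont.comp (continuousOn_id.prodMk ((hcu2 t ht).prodMk (hcv2 t ht)))
      intro ξ hξ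
      exact mk_mem_prod hξ (mem_univ _)
    exact (hf1.sub hf2).div hlu_cont (fun x hx => ne_of_gt (hlu_pos x hx))
  -- derivative of the w-difference in x
  have hWd : ∀ t, 0 ≤ t → ∀ ξ ∈ Icc (0:ℝ) 1, HasDerivAt (fun y => uh1 y t - uh2 y t)
      ((fu ξ (uh1 ξ t) (vh1 ξ t) - fu ξ (uh2 ξ t) (vh2 ξ t)) / lu ξ) ξ := by
    intro t ht ξ hξ
    have := ((hsol1d ξ hξ t ht).1).sub ((hsol2d ξ hξ t ht).1)
    rwa [← sub_div] at this
  have hWcont : ∀ t, 0 ≤ t → ContinuousOn (fun ξ => uh1 ξ t - uh2 ξ t) (Icc (0:ℝ) 1) :=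
    fun t ht => ((hcu1 t ht).sub (hcu2 t ht))
  -- w integral identity
  have hWid : ∀ t, 0 ≤ t → ∀ y ∈ Icc (0:ℝ) 1, uh1 y t - uh2 y t
      = -∫ ξ in y..1, (fu ξ (uh1 ξ t) (vh1 ξ t) - fu ξ (uh2 ξ t) (vh2 ξ t)) / lu ξ := by
    intro t ht y hy
    have hsub : uIcc y (1:ℝ) ⊆ Icc (0:ℝ) 1 := hIccsub y hy 1 h1mem
    have hftc : (∫ ξ in y..1, (fu ξ (uh1 ξ t) (vh1 ξ t) - fu ξ (uh2 ξ t) (vh2 ξ t)) / lu ξ)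
        = (uh1 1 t - uh2 1 t) - (uh1 y t - uh2 y t) := by
      refine intervalIntegral.integral_eq_sub_of_hasDerivAt
        (f := fun y => uh1 y t - uh2 y t) (fun ξ hξ => hWd t ht ξ (hsub hξ)) ?_
      exact ((hfu_slice t ht).mono hsub).intervalIntegrable
    rw [hftc, hbc_u t ht]
    ring
  -- now fix the final time
  intro T hT x hx
  have hTtau : tau 0 ≤ T := hT
  have hT0 : (0:ℝ) ≤ T := le_trans (htau_nonneg 0 h0mem) hTtau
  have hKc : IsCompact (Icc (0:ℝ) 1 ×ˢ Icc (0:ℝ) T) := isCompact_Icc.prod isCompact_Icc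
  have hKsub : (Icc (0:ℝ) 1 ×ˢ Icc (0:ℝ) T) ⊆ (Icc (0:ℝ) 1 ×ˢ Ici (0:ℝ)) :=
    prod_mono subset_rfl Icc_subset_Ici_self
  obtain ⟨Mz0, hMz0⟩ := hKc.exists_bound_of_continuousOn (hz_cont.mono hKsub)
  set Mz := max Mz0 0 with hMzdef
  have hMz : ∀ ξ ∈ Icc (0:ℝ) 1, ∀ s ∈ Icc (0:ℝ) T, |vh1 ξ s - vh2 ξ s| ≤ Mz := by
    intro ξ hξ s hs
    have := hMz0 (ξ, s) (mk_mem_prod hξ hs)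
    rw [Real.norm_eq_abs] at this
    exact le_trans this (le_max_left _ _)
  have hMznn : (0:ℝ) ≤ Mz := le_max_right _ _
  set b := lF * l with hbdef
  have hb0 : 0 ≤ b := mul_nonneg hlF (le_of_lt hl)
  -- a priori bound on w via Gronwall
  have hWbound : ∀ s ∈ Icc (0:ℝ) T, ∀ y ∈ Icc (0:ℝ) 1,
      |uh1 y s - uh2 y s| ≤ (b * Mz) * Real.exp b := by
    intro s hs
    apply gronwall_aux (fun y => |uh1 y s - uh2 y s|) (b*Mz) b
      (by positivity) hb0 ((hWcont s hs.1).abs) (fun y hy => abs_nonneg _)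
    intro y hy
    have hsub : uIcc y (1:ℝ) ⊆ Icc (0:ℝ) 1 := hIccsub y hy 1 h1mem
    have hid := hWid s hs.1 y hy
    have hintf : IntervalIntegrable
        (fun ξ => |(fu ξ (uh1 ξ s) (vh1 ξ s) - fu ξ (uh2 ξ s) (vh2 ξ s)) / lu ξ|)
        volume y 1 := (((hfu_slice s hs.1).mono hsub).abs).intervalIntegrable
    have hintg : IntervalIntegrable
        (fun ξ => b * Mz + b * |uh1 ξ s - uh2 ξ s|) volume y 1 := by
      apply ContinuousOn.intervalIntegrable
      exact continuousOn_const.add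
        (continuousOn_const.mul (((hWcont s hs.1).mono hsub).abs))
    have hintW : IntervalIntegrable (fun ξ => |uh1 ξ s - uh2 ξ s|) volume y 1 :=
      (((hWcont s hs.1).mono hsub).abs).intervalIntegrable
    calc |uh1 y s - uh2 y s|
        = |∫ ξ in y..1, (fu ξ (uh1 ξ s) (vh1 ξ s) - fu ξ (uh2 ξ s) (vh2 ξ s)) / lu ξ| := by
          rw [hid, abs_neg]
      _ ≤ ∫ ξ in y..1, |(fu ξ (uh1 ξ s) (vh1 ξ s) - fu ξ (uh2 ξ s) (vh2 ξ s)) / lu ξ| :=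
          intervalIntegral.abs_integral_le_integral_abs hy.2
      _ ≤ ∫ ξ in y..1, (b * Mz + b * |uh1 ξ s - uh2 ξ s|) := by
          apply intervalIntegral.integral_mono_on hy.2 hintf hintg
          intro ξ hξ
          have hξm : ξ ∈ Icc (0:ℝ) 1 := ⟨le_trans hy.1 hξ.1, hξ.2⟩
          have hΔ := hfu_lip ξ hξm (uh1 ξ s) (vh1 ξ s) (uh2 ξ s) (vh2 ξ s)
          have hz' : |vh1 ξ s - vh2 ξ s| ≤ Mz := hMz ξ hξm s hs
          have hmax : max |uh1 ξ s - uh2 ξ s| |vh1 ξ s - vh2 ξ s|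
              ≤ |uh1 ξ s - uh2 ξ s| + Mz :=
            max_le (le_add_of_nonneg_right hMznn) (by linarith [abs_nonneg (uh1 ξ s - uh2 ξ s)])
          calc |(fu ξ (uh1 ξ s) (vh1 ξ s) - fu ξ (uh2 ξ s) (vh2 ξ s)) / lu ξ|
              = |fu ξ (uh1 ξ s) (vh1 ξ s) - fu ξ (uh2 ξ s) (vh2 ξ s)| * (lu ξ)⁻¹ := by
                rw [abs_div, abs_of_pos (hlu_pos ξ hξm), div_eq_mul_inv]
            _ ≤ (lF * (|uh1 ξ s - uh2 ξ s| + Mz)) * l := by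
                apply mul_le_mul
                · exact hΔ.trans (mul_le_mul_of_nonneg_left hmax hlF)
                · exact hluinv_le_l ξ hξm
                · exact le_of_lt (inv_pos.2 (hlu_pos ξ hξm))
                · positivity
            _ = b * Mz + b * |uh1 ξ s - uh2 ξ s| := by rw [hbdef]; ring
      _ = b * Mz * (1 - y) + b * ∫ ξ in y..1, |uh1 ξ s - uh2 ξ s| := by
          rw [intervalIntegral.integral_add intervalIntegrable_const (hintW.const_mul b),
            intervalIntegral.integral_const, intervalIntegral.integral_const_mul]
          simp [smul_eq_mul]
          ring
      _ ≤ b * Mz + b * ∫ ξ in y..1, |uh1 ξ s - uh2 ξ s| := by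
          have h1 : b * Mz * (1 - y) ≤ b * Mz * 1 := by
            apply mul_le_mul_of_nonneg_left _ (by positivity)
            linarith [hy.1]
          linarith
  set M := Mz + (b * Mz) * Real.exp b with hMdef
  have hM0 : (0:ℝ) ≤ M := by positivity
  have hMzM : Mz ≤ M := by
    rw [hMdef]
    nlinarith [mul_nonneg (mul_nonneg hb0 hMznn) (Real.exp_pos b).le]
  have hWM : (b * Mz) * Real.exp b ≤ M := by
    rw [hMdef]
    linarith
  set C := lF + 1 with hCdef
  have hC0 : (0:ℝ) < C := by rw [hCdef]; linarith
  have hlFC : lF ≤ C := by rw [hCdef]; linarith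
  -- the key induction
  have key : ∀ n : ℕ, ∀ y ∈ Icc (0:ℝ) 1, ∀ s : ℝ, tau y ≤ s → s ≤ T →
      max |uh1 y s - uh2 y s| |vh1 y s - vh2 y s|
        ≤ M * (C * (s + tau y))^n / (n.factorial : ℝ) := by
    intro n
    induction n with
    | zero =>
      intro y hy s hs1 hs2
      have hs0 : (0:ℝ) ≤ s := le_trans (htau_nonneg y hy) hs1
      simp only [pow_zero, Nat.factorial_zero, Nat.cast_one, mul_one, div_one]
      apply max_le
      · exact le_trans (hWbound s ⟨hs0, hs2⟩ y hy) hWM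
      · exact le_trans (hMz y hy s ⟨hs0, hs2⟩) hMzM
    | succ n ih =>
      intro y hy s hs1 hs2
      have hs0 : (0:ℝ) ≤ s := le_trans (htau_nonneg y hy) hs1
      have hsub : Icc y 1 ⊆ Icc (0:ℝ) 1 := Icc_subset_Icc hy.1 le_rfl
      have hsub' : Ioo y 1 ⊆ Ioo (0:ℝ) 1 := Ioo_subset_Ioo hy.1 le_rfl
      have hfactpos : (0:ℝ) < (n.factorial : ℝ) := by
        exact_mod_cast Nat.factorial_pos n
      have hfactpos' : (0:ℝ) < ((n+1).factorial : ℝ) := by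
        exact_mod_cast Nat.factorial_pos (n+1)
      set c := s - tau y with hcdef
      have hc0 : 0 ≤ c := by rw [hcdef]; linarith
      set P : ℝ → ℝ := fun ξ => C * (s + tau ξ) with hPdef
      have hPnn : ∀ ξ ∈ Icc (0:ℝ) 1, 0 ≤ P ξ := by
        intro ξ hξ
        have h1 := htau_nonneg ξ hξ
        have : (0:ℝ) ≤ s + tau ξ := by linarith
        exact mul_nonneg hC0.le this
      set cst := lF * M / (C * ((n+1).factorial : ℝ)) with hcstdef
      have hcstnn : 0 ≤ cst := by
        rw [hcstdef]
        apply div_nonneg (mul_nonneg hlF hM0) (le_of_lt (by positivity))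
      set Phi : ℝ → ℝ := fun ξ => -cst * (P ξ)^(n+1) with hPhidef
      have hPcont : ContinuousOn P (Icc (0:ℝ) 1) :=
        continuousOn_const.mul (continuousOn_const.add htau_cont)
      have hPhicont : ContinuousOn Phi (Icc (0:ℝ) 1) :=
        continuousOn_const.mul (hPcont.pow _)
      have hPd : ∀ ξ ∈ Ioo (0:ℝ) 1, HasDerivAt P (C * -(mu ξ)⁻¹) ξ :=
        fun ξ hξ => ((htau_deriv ξ hξ).const_add s).const_mul C
      have hPhid : ∀ ξ ∈ Ioo (0:ℝ) 1, HasDerivAt Phi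
          ((lF * M / (n.factorial : ℝ)) * (P ξ)^n * (mu ξ)⁻¹) ξ := by
        intro ξ hξ
        have h2 := ((hPd ξ hξ).pow (n+1)).const_mul (-cst)
        have hmune : mu ξ ≠ 0 := ne_of_gt (hmu_pos ξ (Ioo_subset_Icc_self hξ))
        refine h2.congr_deriv (Eq.symm ?_)
        have hfact : ((n+1).factorial : ℝ) = ((n:ℝ)+1) * (n.factorial : ℝ) := by
          rw [Nat.factorial_succ]; push_cast; ring
        rw [hcstdef, hfact]
        have hne1 : (n.factorial : ℝ) ≠ 0 := ne_of_gt hfactpos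
        have hne2 : ((n:ℝ)+1) ≠ 0 := by positivity
        have hne3 : C ≠ 0 := ne_of_gt hC0
        simp only [Nat.add_sub_cancel, Nat.cast_add, Nat.cast_one]
        field_simp
      -- comparison principle on [y,1]
      have comp : ∀ F F' : ℝ → ℝ, ContinuousOn F (Icc y 1) →
          (∀ ξ ∈ Ioo y 1, HasDerivAt F (F' ξ) ξ) →
          (∀ ξ ∈ Ioo y 1, |F' ξ| ≤ (lF * M / (n.factorial : ℝ)) * (P ξ)^n * (mu ξ)⁻¹) →
          F 1 = 0 → |F y| ≤ Phi 1 - Phi y := by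
        intro F F' hFc hFd hFb hF1
        have hymem : y ∈ Icc y (1:ℝ) := left_mem_Icc.2 hy.2
        have h1mem' : (1:ℝ) ∈ Icc y (1:ℝ) := right_mem_Icc.2 hy.2
        have hdiff1 : ∀ ξ ∈ Ioo y 1, HasDerivAt (fun ξ => Phi ξ - F ξ)
            ((lF * M / (n.factorial : ℝ)) * (P ξ)^n * (mu ξ)⁻¹ - F' ξ) ξ :=
          fun ξ hξ => (hPhid ξ (hsub' hξ)).sub (hFd ξ hξ)
        have hdiff2 : ∀ ξ ∈ Ioo y 1, HasDerivAt (fun ξ => Phi ξ + F ξ)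
            ((lF * M / (n.factorial : ℝ)) * (P ξ)^n * (mu ξ)⁻¹ + F' ξ) ξ :=
          fun ξ hξ => (hPhid ξ (hsub' hξ)).add (hFd ξ hξ)
        have hmono1 : MonotoneOn (fun ξ => Phi ξ - F ξ) (Icc y 1) := by
          apply monotoneOn_of_deriv_nonneg (convex_Icc y 1) ((hPhicont.mono hsub).sub hFc)
          · intro ξ hξ
            rw [interior_Icc] at hξ
            exact (hdiff1 ξ hξ).differentiableAt.differentiableWithinAt
          · intro ξ hξ
            rw [interior_Icc] at hξ
            rw [show deriv (Phi - F) ξ = _ from (hdiff1 ξ hξ).deriv]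
            have h2 := abs_le.1 (hFb ξ hξ)
            linarith [h2.2]
        have hmono2 : MonotoneOn (fun ξ => Phi ξ + F ξ) (Icc y 1) := by
          apply monotoneOn_of_deriv_nonneg (convex_Icc y 1) ((hPhicont.mono hsub).add hFc)
          · intro ξ hξ
            rw [interior_Icc] at hξ
            exact (hdiff2 ξ hξ).differentiableAt.differentiableWithinAt
          · intro ξ hξ
            rw [interior_Icc] at hξ
            rw [show deriv (Phi + F) ξ = _ from (hdiff2 ξ hξ).deriv]
            have h2 := abs_le.1 (hFb ξ hξ)
            linarith [h2.1]
        have e1 : Phi y - F y ≤ Phi 1 - F 1 := hmono1 hymem h1mem' hy.2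
        have e2 : Phi y + F y ≤ Phi 1 + F 1 := hmono2 hymem h1mem' hy.2
        rw [hF1] at e1 e2
        rw [abs_le]
        constructor <;> linarith
      -- apply to w
      have hwle : |uh1 y s - uh2 y s| ≤ Phi 1 - Phi y := by
        apply comp (fun ξ => uh1 ξ s - uh2 ξ s)
          (fun ξ => (fu ξ (uh1 ξ s) (vh1 ξ s) - fu ξ (uh2 ξ s) (vh2 ξ s)) / lu ξ)
          ((hWcont s hs0).mono hsub)
          (fun ξ hξ => hWd s hs0 ξ (hsub (Ioo_subset_Icc_self hξ)))
          ?_ (sub_eq_zero.2 (hbc_u s hs0))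
        intro ξ hξ
        have hξI : ξ ∈ Icc (0:ℝ) 1 := hsub (Ioo_subset_Icc_self hξ)
        have hih : max |uh1 ξ s - uh2 ξ s| |vh1 ξ s - vh2 ξ s|
            ≤ M * (P ξ)^n / (n.factorial : ℝ) :=
          ih ξ hξI s (le_trans (htau_anti y hy ξ hξI (le_of_lt hξ.1)) hs1) hs2
        have hΔ := hfu_lip ξ hξI (uh1 ξ s) (vh1 ξ s) (uh2 ξ s) (vh2 ξ s)
        have hnn1 : (0:ℝ) ≤ lF * (M * (P ξ)^n / (n.factorial : ℝ)) :=
          mul_nonneg hlF (div_nonneg (mul_nonneg hM0 (pow_nonneg (hPnn ξ hξI) n))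
            hfactpos.le)
        calc |(fu ξ (uh1 ξ s) (vh1 ξ s) - fu ξ (uh2 ξ s) (vh2 ξ s)) / lu ξ|
            = |fu ξ (uh1 ξ s) (vh1 ξ s) - fu ξ (uh2 ξ s) (vh2 ξ s)| * (lu ξ)⁻¹ := by
              rw [abs_div, abs_of_pos (hlu_pos ξ hξI), div_eq_mul_inv]
          _ ≤ (lF * (M * (P ξ)^n / (n.factorial : ℝ))) * (mu ξ)⁻¹ := by
              apply mul_le_mul
              · exact hΔ.trans (mul_le_mul_of_nonneg_left hih hlF)
              · exact hluinv_le_muinv ξ hξI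
              · exact le_of_lt (inv_pos.2 (hlu_pos ξ hξI))
              · exact hnn1
          _ = (lF * M / (n.factorial : ℝ)) * (P ξ)^n * (mu ξ)⁻¹ := by ring
      -- apply to z along the characteristic
      have hzle : |vh1 y (c + tau y) - vh2 y (c + tau y)| ≤ Phi 1 - Phi y := by
        apply comp (fun ξ => vh1 ξ (c + tau ξ) - vh2 ξ (c + tau ξ))
          (fun ξ => (vhx1 ξ (c + tau ξ) - vhx2 ξ (c + tau ξ)) +
            ((mu ξ * vhx1 ξ (c + tau ξ) + nu ξ * fv ξ (uh1 ξ (c + tau ξ)) (vh1 ξ (c + tau ξ)))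
            - (mu ξ * vhx2 ξ (c + tau ξ) + nu ξ * fv ξ (uh2 ξ (c + tau ξ)) (vh2 ξ (c + tau ξ))))
            * (-(mu ξ)⁻¹))
        · -- continuity
          have hcurve : ContinuousOn (fun ξ : ℝ => ((ξ, c + tau ξ) : ℝ × ℝ)) (Icc y 1) :=
            continuousOn_id.prodMk (continuousOn_const.add (htau_cont.mono hsub))
          apply hz_cont.comp hcurve
          intro ξ hξ
          have h1 := htau_nonneg ξ (hsub hξ)
          exact mk_mem_prod (hsub hξ) (by simp only [mem_Ici]; linarith)
        · -- derivative
          intro ξ hξ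
          have hξI : ξ ∈ Icc (0:ℝ) 1 := hsub (Ioo_subset_Icc_self hξ)
          have hξO : ξ ∈ Ioo (0:ℝ) 1 := hsub' hξ
          have htpos : 0 < c + tau ξ := by
            have := htau_pos ξ hξI hξO.2
            linarith
          have hnhds : (Icc (0:ℝ) 1 ×ˢ Ici (0:ℝ)) ∈ nhds ((ξ, c + tau ξ) : ℝ × ℝ) :=
            prod_mem_nhds (Icc_mem_nhds hξO.1 hξO.2) (Ici_mem_nhds htpos)
          have hγ : HasDerivAt (fun ξ => c + tau ξ) (-(mu ξ)⁻¹) ξ :=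
            (htau_deriv ξ hξO).const_add c
          have hxev : ∀ᶠ q : ℝ × ℝ in nhds ((ξ, c + tau ξ) : ℝ × ℝ),
              HasDerivAt (fun y => vh1 y q.2 - vh2 y q.2)
                (vhx1 q.1 q.2 - vhx2 q.1 q.2) q.1 := by
            filter_upwards [hnhds] with q hq
            rw [mem_prod] at hq
            exact ((hsol1d q.1 hq.1 q.2 hq.2).2.1).sub ((hsol2d q.1 hq.1 q.2 hq.2).2.1)
          have hxcc : ContinuousAt (fun q : ℝ × ℝ => vhx1 q.1 q.2 - vhx2 q.1 q.2)
              ((ξ, c + tau ξ) : ℝ × ℝ) := (hvx1c.sub hvx2c).continuousAt hnhds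
          have htmem : c + tau ξ ∈ Ici (0:ℝ) := le_of_lt htpos
          exact hasDerivAt_comp_curve
            (fun a b => vh1 a b - vh2 a b)
            (fun a b => vhx1 a b - vhx2 a b)
            (fun a b => (mu a * vhx1 a b + nu a * fv a (uh1 a b) (vh1 a b))
              - (mu a * vhx2 a b + nu a * fv a (uh2 a b) (vh2 a b)))
            (fun ξ => c + tau ξ) (-(mu ξ)⁻¹) ξ hγ hxev hxcc
            (((hsol1d ξ hξI _ htmem).2.2).sub ((hsol2d ξ hξI _ htmem).2.2))
        · -- derivative bound
          intro ξ hξ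
          have hξI : ξ ∈ Icc (0:ℝ) 1 := hsub (Ioo_subset_Icc_self hξ)
          have hmune : mu ξ ≠ 0 := ne_of_gt (hmu_pos ξ hξI)
          have hrw : (vhx1 ξ (c + tau ξ) - vhx2 ξ (c + tau ξ)) +
              ((mu ξ * vhx1 ξ (c + tau ξ) + nu ξ * fv ξ (uh1 ξ (c + tau ξ)) (vh1 ξ (c + tau ξ)))
              - (mu ξ * vhx2 ξ (c + tau ξ) + nu ξ * fv ξ (uh2 ξ (c + tau ξ)) (vh2 ξ (c + tau ξ))))
              * (-(mu ξ)⁻¹)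
              = -(nu ξ * (mu ξ)⁻¹ * (fv ξ (uh1 ξ (c + tau ξ)) (vh1 ξ (c + tau ξ))
                - fv ξ (uh2 ξ (c + tau ξ)) (vh2 ξ (c + tau ξ)))) := by
            field_simp
            ring
          rw [hrw, abs_neg, abs_mul, abs_mul, abs_of_nonneg (hnu_nonneg ξ hξI),
            abs_of_nonneg (hmuinv_nonneg ξ hξI)]
          have htauleq : tau ξ ≤ tau y := htau_anti y hy ξ hξI (le_of_lt hξ.1)
          have htle : c + tau ξ ≤ s := by rw [hcdef]; linarith
          have hih : max |uh1 ξ (c + tau ξ) - uh2 ξ (c + tau ξ)|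
              |vh1 ξ (c + tau ξ) - vh2 ξ (c + tau ξ)|
              ≤ M * (C * ((c + tau ξ) + tau ξ))^n / (n.factorial : ℝ) :=
            ih ξ hξI (c + tau ξ) (le_add_of_nonneg_left hc0) (le_trans htle hs2)
          have hΔ := hfv_lip ξ hξI (uh1 ξ (c + tau ξ)) (vh1 ξ (c + tau ξ))
            (uh2 ξ (c + tau ξ)) (vh2 ξ (c + tau ξ))
          have hbase_nn : (0:ℝ) ≤ C * ((c + tau ξ) + tau ξ) := by
            have h1 := htau_nonneg ξ hξI
            have : (0:ℝ) ≤ (c + tau ξ) + tau ξ := by linarith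
            exact mul_nonneg hC0.le this
          have hpowle : (C * ((c + tau ξ) + tau ξ))^n ≤ (P ξ)^n := by
            apply pow_le_pow_left₀ hbase_nn
            rw [hPdef]
            apply mul_le_mul_of_nonneg_left _ hC0.le
            rw [hcdef]
            linarith
          have hX3 : |fv ξ (uh1 ξ (c + tau ξ)) (vh1 ξ (c + tau ξ))
              - fv ξ (uh2 ξ (c + tau ξ)) (vh2 ξ (c + tau ξ))|
              ≤ lF * (M * (P ξ)^n / (n.factorial : ℝ)) := by
            refine (hΔ.trans (mul_le_mul_of_nonneg_left hih hlF)).trans ?_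
            apply mul_le_mul_of_nonneg_left _ hlF
            exact (div_le_div_iff_of_pos_right hfactpos).2 (mul_le_mul_of_nonneg_left hpowle hM0)
          calc nu ξ * (mu ξ)⁻¹ * |fv ξ (uh1 ξ (c + tau ξ)) (vh1 ξ (c + tau ξ))
              - fv ξ (uh2 ξ (c + tau ξ)) (vh2 ξ (c + tau ξ))|
              ≤ 1 * (mu ξ)⁻¹ * (lF * (M * (P ξ)^n / (n.factorial : ℝ))) := by
                apply mul_le_mul
                · exact mul_le_mul_of_nonneg_right (hnu_le1 ξ hξI) (hmuinv_nonneg ξ hξI)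
                · exact hX3
                · exact abs_nonneg _
                · simpa using hmuinv_nonneg ξ hξI
            _ = (lF * M / (n.factorial : ℝ)) * (P ξ)^n * (mu ξ)⁻¹ := by ring
        · -- boundary value
          rw [htau1, add_zero]
          exact sub_eq_zero.2 (hbc_v c hc0)
      have hcy : c + tau y = s := by rw [hcdef]; ring
      rw [hcy] at hzle
      have hPhile : Phi 1 - Phi y ≤ M * (C*(s+tau y))^(n+1) / ((n+1).factorial : ℝ) := by
        have hP1nn : 0 ≤ P 1 := hPnn 1 h1mem
        have hPynn : 0 ≤ P y := hPnn y hy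
        have h1 : Phi 1 - Phi y = cst * ((P y)^(n+1) - (P 1)^(n+1)) := by
          rw [hPhidef]; ring
        have h2 : cst * ((P y)^(n+1) - (P 1)^(n+1)) ≤ cst * (P y)^(n+1) := by
          rw [mul_sub]
          have hBnn := mul_nonneg hcstnn (pow_nonneg hP1nn (n+1))
          linarith
        have h3 : cst * (P y)^(n+1) ≤ M * (P y)^(n+1) / ((n+1).factorial : ℝ) := by
          have hPp : (0:ℝ) ≤ (P y)^(n+1) := pow_nonneg hPynn _
          have hcstle : cst ≤ M / ((n+1).factorial : ℝ) := by
            rw [hcstdef, div_le_div_iff₀ (by positivity) hfactpos']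
            have h5 : lF * M ≤ C * M := mul_le_mul_of_nonneg_right hlFC hM0
            have h6 : lF * M * ((n+1).factorial : ℝ) ≤ C * M * ((n+1).factorial : ℝ) :=
              mul_le_mul_of_nonneg_right h5 hfactpos'.le
            linarith
          have h7 := mul_le_mul_of_nonneg_right hcstle hPp
          have h8 : M / ((n+1).factorial : ℝ) * (P y)^(n+1)
              = M * (P y)^(n+1) / ((n+1).factorial : ℝ) := by ring
          linarith
        have h4 : (P y)^(n+1) = (C*(s+tau y))^(n+1) := rfl
        rw [← h4]
        linarith
      exact max_le (le_trans hwle hPhile) (le_trans hzle hPhile)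
  -- conclusion
  have hxT : tau x ≤ T := le_trans (htau_anti 0 h0mem x hx hx.1) hTtau
  have hbound : ∀ n : ℕ, max |uh1 x T - uh2 x T| |vh1 x T - vh2 x T|
      ≤ M * (C * (T + tau x))^n / (n.factorial : ℝ) := fun n => key n x hx T hxT le_rfl
  have hlim : Tendsto (fun n : ℕ => M * (C * (T + tau x))^n / (n.factorial : ℝ))
      atTop (nhds 0) := by
    have h1 := FloorSemiring.tendsto_pow_div_factorial_atTop (K := ℝ) (C * (T + tau x))
    have h2 := h1.const_mul M
    rw [mul_zero] at h2
    exact h2.congr (fun n => by ring)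
  have hle0 : max |uh1 x T - uh2 x T| |vh1 x T - vh2 x T| ≤ 0 :=
    ge_of_tendsto hlim (Filter.Eventually.of_forall hbound)
  have hw0 : |uh1 x T - uh2 x T| ≤ 0 := le_trans (le_max_left _ _) hle0
  have hz0 : |vh1 x T - vh2 x T| ≤ 0 := le_trans (le_max_right _ _) hle0
  constructor
  · exact sub_eq_zero.1 (abs_nonpos_iff.1 hw0)
  · exact sub_eq_zero.1 (abs_nonpos_iff.1 hz0)
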